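/- arXiv:2004.14670 — 2 statements merged into one kernel-verified Lean document; each statement's English description precedes it below -/
import Mathlib

section
/- Let γ > 0, Λ ≥ 1, Λ₁ > 0, and let ε, ε̂, μ, μ̂ be positive real constants with Λ⁻¹ ≤ ε, μ, ε̂, μ̂ ≤ Λ, |ε − ε̂| ≥ Λ₁, and |ε/μ − ε̂/μ̂| ≥ Λ₁. Let α ∈ ℂ with α² ∈ ℝ and |α| = 1 (so α² = ±1), and let k ∈ ℂ with |Im(k²)| ≥ γ|k|² and |Im(α²k²)| ≥ γ|k|² and |k| ≥ 1. Then there is a constant C > 0, depending only on γ, Λ, Λ₁, such that for all ξ ∈ ℝ², |(α²ε̂² − ε²)|ξ|² + α²k² ε ε̂ μ μ̂ (ε̂/μ̂ − ε/μ)| ≥ C(|ξ|² + |k|²). -/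
/-!
Write `α² = a ∈ {±1}` and `z = A s + w P` with `s = |ξ|²`, `w = α² k²` (so `‖w‖ = |k|²`) and the
real numbers `A = a ε̂² − ε²`, `P = ε ε̂ μ μ̂ (ε̂/μ̂ − ε/μ)`. The bounds on the material constants
keep `|A|` and `|P|` away from `0` and `|P|` bounded above. Then `|Im z| = |Im w| |P| ≳ |k|²` and
`|Re z| ≥ |A| s − |P| |k|² ≳ s − |k|²`; a suitable combination of the two bounds controls
`s + |k|²`.
-/

open Set

-- `y ≤ x / m` and `c s ≤ x + q y ≤ (1 + q / m) x`; add the two.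
lemma mul_div_mul_add_le_of_mul_le_of_sub_mul_le {c m q s y x : ℝ} (hc : 0 < c) (hm : 0 < m)
    (hq : 0 ≤ q) (him : m * y ≤ x) (hre : c * s - q * y ≤ x) :
    c * m / (m + q + c) * (s + y) ≤ x := by
  rw [div_mul_eq_mul_div, div_le_iff₀ (by positivity)]
  nlinarith [mul_le_mul_of_nonneg_left him hq, mul_le_mul_of_nonneg_left him hc.le,
    mul_le_mul_of_nonneg_left hre hm.le]

lemma Complex.mul_div_mul_add_le_norm {A P c p q γ s : ℝ} {w : ℂ} (hc : 0 < c) (hp : 0 < p)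
    (hγ : 0 < γ) (hs : 0 ≤ s) (hA : c ≤ |A|) (hPp : p ≤ |P|) (hPq : |P| ≤ q)
    (hw : γ * ‖w‖ ≤ |w.im|) :
    c * (γ * p) / (γ * p + q + c) * (s + ‖w‖) ≤ ‖(A : ℂ) * s + w * P‖ := by
  set z : ℂ := (A : ℂ) * s + w * P
  have hzre : z.re = A * s + w.re * P := by simp [z]
  have hzim : z.im = w.im * P := by simp [z]
  refine mul_div_mul_add_le_of_mul_le_of_sub_mul_le hc (by positivity)
    ((abs_nonneg P).trans hPq) ?_ ?_
  · calc γ * p * ‖w‖ = γ * ‖w‖ * p := by ring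
      _ ≤ |w.im| * |P| := mul_le_mul hw hPp hp.le (abs_nonneg _)
      _ = |z.im| := by rw [hzim, abs_mul]
      _ ≤ ‖z‖ := abs_im_le_norm z
  · have hwP : |w.re * P| ≤ q * ‖w‖ := by
      rw [abs_mul, mul_comm q]
      exact mul_le_mul (abs_re_le_norm w) hPq (abs_nonneg _) (norm_nonneg _)
    calc c * s - q * ‖w‖ ≤ |A * s| - |w.re * P| := by
          rw [abs_mul, abs_of_nonneg hs]
          linarith [mul_le_mul_of_nonneg_right hA hs]
      _ ≤ |z.re| := by rw [hzre]; exact abs_sub_abs_le_abs_add _ _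
      _ ≤ ‖z‖ := abs_re_le_norm z

lemma Complex.eq_one_or_eq_neg_one_of_im_eq_zero {z : ℂ} (him : z.im = 0) (hnorm : ‖z‖ = 1) :
    z = 1 ∨ z = -1 := by
  have hz : z = z.re := ext rfl (by simpa using him)
  rw [hz, norm_real, Real.norm_eq_abs] at hnorm
  rcases abs_eq zero_le_one |>.mp hnorm with h | h
  · exact .inl (by rw [hz, h, ofReal_one])
  · exact .inr (by rw [hz, h, ofReal_neg, ofReal_one])

lemma pos_of_mem_Icc_inv {Λ x : ℝ} (hΛ : 0 < Λ) (hx : x ∈ Icc Λ⁻¹ Λ) : 0 < x :=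
  (inv_pos.mpr hΛ).trans_le hx.1

section MaterialBounds

variable {Λ Λ₁ ε μ εh μh : ℝ} (hΛ : 0 < Λ)
  (hε : ε ∈ Icc Λ⁻¹ Λ) (hμ : μ ∈ Icc Λ⁻¹ Λ) (hεh : εh ∈ Icc Λ⁻¹ Λ) (hμh : μh ∈ Icc Λ⁻¹ Λ)
include hΛ hε hεh

lemma min_le_abs_sign_mul_sq_sub_sq {a : ℝ} (ha : a = 1 ∨ a = -1) (hdiff : Λ₁ ≤ |ε - εh|) :
    min (2 * Λ⁻¹ * Λ₁) (2 * Λ⁻¹ ^ 2) ≤ |a * εh ^ 2 - ε ^ 2| := by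
  have hΛi : 0 < Λ⁻¹ := inv_pos.mpr hΛ
  rcases ha with rfl | rfl
  · refine min_le_of_left_le ?_
    rw [one_mul, sq_sub_sq, abs_mul, abs_sub_comm, abs_of_pos (by linarith [hε.1, hεh.1])]
    calc 2 * Λ⁻¹ * Λ₁ = Λ₁ * (2 * Λ⁻¹) := by ring
      _ ≤ |ε - εh| * (εh + ε) :=
        mul_le_mul hdiff (by linarith [hε.1, hεh.1]) (by positivity) (abs_nonneg _)
      _ = (εh + ε) * |ε - εh| := mul_comm _ _
  · refine min_le_of_right_le ?_
    rw [abs_of_neg (by nlinarith [hε.1, hεh.1])]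
    nlinarith [mul_le_mul hε.1 hε.1 hΛi.le (by linarith [hε.1]),
      mul_le_mul hεh.1 hεh.1 hΛi.le (by linarith [hεh.1])]

include hμ hμh

lemma le_abs_mul_sub_div (hdiv : Λ₁ ≤ |ε / μ - εh / μh|) :
    Λ⁻¹ ^ 4 * Λ₁ ≤ |ε * εh * μ * μh * (εh / μh - ε / μ)| := by
  have hΛi : 0 < Λ⁻¹ := inv_pos.mpr hΛ
  have hprod : Λ⁻¹ ^ 4 ≤ ε * εh * μ * μh := by
    have := hε.1; have := hεh.1; have := hμ.1; have := hμh.1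
    rw [show Λ⁻¹ ^ 4 = Λ⁻¹ * Λ⁻¹ * Λ⁻¹ * Λ⁻¹ by ring]
    bound
  rw [abs_mul, abs_sub_comm, abs_of_pos (hprod.trans_lt' (by positivity))]
  linarith [mul_le_mul hdiv hprod (by positivity) (abs_nonneg _)]

lemma abs_mul_sub_div_le :
    |ε * εh * μ * μh * (εh / μh - ε / μ)| ≤ Λ ^ 6 := by
  have hquot {x y : ℝ} (hx : x ∈ Icc Λ⁻¹ Λ) (hy : y ∈ Icc Λ⁻¹ Λ) : x / y ≤ Λ ^ 2 := by
    rw [sq, ← div_inv_eq_mul]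
    exact div_le_div₀ hΛ.le hx.2 (inv_pos.mpr hΛ) hy.1
  have hε₀ := pos_of_mem_Icc_inv hΛ hε
  have hεh₀ := pos_of_mem_Icc_inv hΛ hεh
  have hμ₀ := pos_of_mem_Icc_inv hΛ hμ
  have hμh₀ := pos_of_mem_Icc_inv hΛ hμh
  have hprod : ε * εh * μ * μh ≤ Λ ^ 4 := by
    rw [show Λ ^ 4 = Λ * Λ * Λ * Λ by ring]
    have := hε.2; have := hεh.2; have := hμ.2; have := hμh.2
    bound
  rw [abs_mul, abs_of_pos (by positivity), show Λ ^ 6 = Λ ^ 4 * Λ ^ 2 by ring]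
  refine mul_le_mul hprod ?_ (abs_nonneg _) (by positivity)
  exact abs_sub_le_of_nonneg_of_le (by positivity) (hquot hεh hμh) (by positivity) (hquot hε hμ)

end MaterialBounds

/-- Non-degeneracy estimate (pro-HS-em):
`|(α²ε̂² − ε²)|ξ|² + α²k² ε ε̂ μ μ̂ (ε̂/μ̂ − ε/μ)| ≥ C(|ξ|² + |k|²)`. -/
theorem stmt_1 (γ Λ Λ₁ : ℝ) (hγ : 0 < γ) (hΛ : 1 ≤ Λ) (hΛ₁ : 0 < Λ₁) :
    ∃ C > 0, ∀ (ε μ εh μh : ℝ) (α k : ℂ),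
      Λ⁻¹ ≤ ε → ε ≤ Λ → Λ⁻¹ ≤ μ → μ ≤ Λ →
      Λ⁻¹ ≤ εh → εh ≤ Λ → Λ⁻¹ ≤ μh → μh ≤ Λ →
      Λ₁ ≤ |ε - εh| → Λ₁ ≤ |ε / μ - εh / μh| →
      (α ^ 2).im = 0 → ‖α‖ = 1 →
      γ * ‖k‖ ^ 2 ≤ |(k ^ 2).im| →
      γ * ‖k‖ ^ 2 ≤ |(α ^ 2 * k ^ 2).im| →
      1 ≤ ‖k‖ →
      ∀ ξ : EuclideanSpace ℝ (Fin 2),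
        C * (‖ξ‖ ^ 2 + ‖k‖ ^ 2) ≤
          ‖(α ^ 2 * (εh : ℂ) ^ 2 - (ε : ℂ) ^ 2) * ((‖ξ‖ ^ 2 : ℝ) : ℂ) +
            α ^ 2 * k ^ 2 * (ε : ℂ) * (εh : ℂ) * (μ : ℂ) * (μh : ℂ) *
              ((εh / μh - ε / μ : ℝ) : ℂ)‖ := by
  have hΛ₀ : 0 < Λ := by linarith
  set c := min (2 * Λ⁻¹ * Λ₁) (2 * Λ⁻¹ ^ 2)
  set p := Λ⁻¹ ^ 4 * Λ₁
  refine ⟨c * (γ * p) / (γ * p + Λ ^ 6 + c), by positivity, ?_⟩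
  intro ε μ εh μh α k hε₁ hε₂ hμ₁ hμ₂ hεh₁ hεh₂ hμh₁ hμh₂ hdiff hdiv hαim hαnorm _ hk _ ξ
  obtain ⟨a, ha, hα⟩ : ∃ a : ℝ, (a = 1 ∨ a = -1) ∧ α ^ 2 = a := by
    rcases Complex.eq_one_or_eq_neg_one_of_im_eq_zero hαim (by simp [hαnorm]) with h | h
    exacts [⟨1, .inl rfl, by simp [h]⟩, ⟨-1, .inr rfl, by simp [h]⟩]
  have hsymbol : (α ^ 2 * (εh : ℂ) ^ 2 - (ε : ℂ) ^ 2) * ((‖ξ‖ ^ 2 : ℝ) : ℂ) +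
      α ^ 2 * k ^ 2 * (ε : ℂ) * (εh : ℂ) * (μ : ℂ) * (μh : ℂ) * ((εh / μh - ε / μ : ℝ) : ℂ) =
      ((a * εh ^ 2 - ε ^ 2 : ℝ) : ℂ) * ((‖ξ‖ ^ 2 : ℝ) : ℂ) +
      (α ^ 2 * k ^ 2) * ((ε * εh * μ * μh * (εh / μh - ε / μ) : ℝ) : ℂ) := by
    rw [hα]; push_cast; ring
  have hwnorm : ‖α ^ 2 * k ^ 2‖ = ‖k‖ ^ 2 := by simp [hαnorm]
  rw [hsymbol, ← hwnorm]
  exact Complex.mul_div_mul_add_le_norm (by positivity) (by positivity) hγ (by positivity)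
    (min_le_abs_sign_mul_sq_sub_sq hΛ₀ ⟨hε₁, hε₂⟩ ⟨hεh₁, hεh₂⟩ ha hdiff)
    (le_abs_mul_sub_div hΛ₀ ⟨hε₁, hε₂⟩ ⟨hμ₁, hμ₂⟩ ⟨hεh₁, hεh₂⟩ ⟨hμh₁, hμh₂⟩ hdiv)
    (abs_mul_sub_div_le hΛ₀ ⟨hε₁, hε₂⟩ ⟨hμ₁, hμ₂⟩ ⟨hεh₁, hεh₂⟩ ⟨hμh₁, hμh₂⟩) (hwnorm ▸ hk)
end

section
/- Let γ > 0, Λ ≥ 1, Λ₁ > 0, and let ε, ε̂, μ, μ̂ be positive real constants with Λ⁻¹ ≤ ε, μ, ε̂, μ̂ ≤ Λ, |μ − μ̂| ≥ Λ₁, and |ε/μ − ε̂/μ̂| ≥ Λ₁. Let α ∈ ℂ with α² ∈ ℝ and |α| = 1, and let k ∈ ℂ with |Im(k²)| ≥ γ|k|² and |Im(α²k²)| ≥ γ|k|² and |k| ≥ 1. Then there is a constant C > 0 depending only on γ, Λ, Λ₁ such that for all ξ ∈ ℝ², |(μ² − α²μ̂²)|ξ|² + α²k² ε ε̂ μ μ̂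 (μ/ε − μ̂/ε̂)| ≥ C(|ξ|² + |k|²). -/
/-!
Since `α²` is real of modulus one, `α² = s` with `s = ±1`, and the symbol takes the form
`A |ξ|² + s B k²` with real `A = μ² − s μ̂²` and `B = ε ε̂ μ μ̂ (μ/ε − μ̂/ε̂) = −(μ μ̂)² (ε/μ − ε̂/μ̂)`.
Both are bounded away from zero: `|A| ≥ 2Λ⁻²` when `s = −1`, and `|A| = |μ − μ̂| (μ + μ̂)` when
`s = 1`. The imaginary part `s B Im(k²)` then controls `|k|²`, and once `|k|²` is controlled the
real part `A |ξ|² + s B Re(k²)` controls `|ξ|²`.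
-/

lemma min_mul_add_le_of_le_of_sub_le {p q r x y N : ℝ} (hp : 0 < p) (hr : 0 ≤ r)
    (hx : 0 ≤ x) (hy : 0 ≤ y) (hN₁ : p * y ≤ N) (hN₂ : q * x - r * y ≤ N) :
    min (p * q / (p + r)) p / 2 * (x + y) ≤ N := by
  -- `(p + r) N ≥ p (q x - r y) + r (p y) = p q x`
  have hx' : p * q / (p + r) * x ≤ N := by
    rw [div_mul_eq_mul_div, div_le_iff₀ (by positivity)]
    nlinarith
  have hmin : min (p * q / (p + r)) p * (x + y) ≤ p * q / (p + r) * x + p * y := by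
    rw [mul_add]
    gcongr
    exacts [min_le_left _ _, min_le_right _ _]
  linarith

lemma min_mul_add_norm_le_norm_ofReal_mul_add {A B t γ a b b' : ℝ} {w : ℂ} (ht : 0 ≤ t)
    (hγ : 0 < γ) (hb : 0 < b) (hA : a ≤ |A|) (hB : b ≤ |B|) (hB' : |B| ≤ b')
    (hw : γ * ‖w‖ ≤ |w.im|) :
    min (γ * b * a / (γ * b + b')) (γ * b) / 2 * (t + ‖w‖) ≤ ‖((A * t : ℝ) : ℂ) + B * w‖ := by
  refine min_mul_add_le_of_le_of_sub_le (by positivity) ((abs_nonneg B).trans hB') ht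
    (norm_nonneg w) ?_ ?_
  · calc γ * b * ‖w‖ = b * (γ * ‖w‖) := by ring
      _ ≤ |B| * |w.im| := by gcongr
      _ = |(((A * t : ℝ) : ℂ) + B * w).im| := by simp [abs_mul]
      _ ≤ _ := Complex.abs_im_le_norm _
  · calc a * t - b' * ‖w‖ ≤ |A| * t - |B| * ‖w‖ := by gcongr
      _ = ‖((A * t : ℝ) : ℂ)‖ - ‖(B : ℂ) * w‖ := by
        simp only [Complex.norm_real, norm_mul, Real.norm_eq_abs, abs_of_nonneg ht]
      _ ≤ _ := norm_sub_le_norm_add _ _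

lemma min_le_abs_sq_sub_mul_sq {μ μh m d s : ℝ} (hm : 0 ≤ m) (hμ : m ≤ μ) (hμh : m ≤ μh)
    (hd : d ≤ |μ - μh|) (hs : |s| = 1) :
    min (2 * m ^ 2) (2 * m * d) ≤ |μ ^ 2 - s * μh ^ 2| := by
  rcases (abs_eq zero_le_one).mp hs with rfl | rfl
  · calc min (2 * m ^ 2) (2 * m * d) ≤ 2 * m * d := min_le_right _ _
      _ ≤ 2 * m * |μ - μh| := by gcongr
      _ ≤ (μ + μh) * |μ - μh| := by gcongr; linarith
      _ = |μ ^ 2 - 1 * μh ^ 2| := by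
        rw [show μ ^ 2 - 1 * μh ^ 2 = (μ + μh) * (μ - μh) by ring, abs_mul,
          abs_of_nonneg (by linarith : 0 ≤ μ + μh)]
  · calc min (2 * m ^ 2) (2 * m * d) ≤ 2 * m ^ 2 := min_le_left _ _
      _ ≤ μ ^ 2 + μh ^ 2 := by nlinarith
      _ = |μ ^ 2 - -1 * μh ^ 2| := by
        rw [show μ ^ 2 - -1 * μh ^ 2 = μ ^ 2 + μh ^ 2 by ring, abs_of_nonneg (by positivity)]

lemma pow_four_mul_le_abs_mul_div_sub_div {ε εh μ μh m d : ℝ} (hε : 0 < ε) (hεh : 0 < εh)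
    (hm : 0 < m) (hμ : m ≤ μ) (hμh : m ≤ μh) (hd : 0 ≤ d) (hdiff : d ≤ |ε / μ - εh / μh|) :
    m ^ 4 * d ≤ |ε * εh * μ * μh * (μ / ε - μh / εh)| := by
  have hμ₀ : 0 < μ := hm.trans_le hμ
  have hμh₀ : 0 < μh := hm.trans_le hμh
  have hB : ε * εh * μ * μh * (μ / ε - μh / εh) = -((μ * μh) ^ 2 * (ε / μ - εh / μh)) := by
    field_simp; ring
  rw [hB, abs_neg, abs_mul, abs_of_nonneg (sq_nonneg _)]
  calc m ^ 4 * d = (m * m) ^ 2 * d := by ring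
    _ ≤ (μ * μh) ^ 2 * |ε / μ - εh / μh| := by gcongr

lemma abs_mul_div_sub_div_le_pow_four {ε εh μ μh M : ℝ} (hε : 0 < ε) (hεh : 0 < εh)
    (hμ : 0 ≤ μ) (hμh : 0 ≤ μh) (hεM : ε ≤ M) (hεhM : εh ≤ M) (hμM : μ ≤ M) (hμhM : μh ≤ M) :
    |ε * εh * μ * μh * (μ / ε - μh / εh)| ≤ M ^ 4 := by
  have hM : 0 ≤ M := hμ.trans hμM
  have hB : ε * εh * μ * μh * (μ / ε - μh / εh) = μ * μh * (εh * μ - ε * μh) := by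
    field_simp
  have hdiff : |εh * μ - ε * μh| ≤ M * M :=
    abs_sub_le_of_nonneg_of_le (by positivity) (by gcongr) (by positivity) (by gcongr)
  rw [hB, abs_mul, abs_of_nonneg (by positivity)]
  calc μ * μh * |εh * μ - ε * μh| ≤ M * M * (M * M) := by gcongr
    _ = M ^ 4 := by ring

/-- Second non-degeneracy estimate (pro-HS-em-2):
`|(μ² − α²μ̂²)|ξ|² + α²k² ε ε̂ μ μ̂ (μ/ε − μ̂/ε̂)| ≥ C(|ξ|² + |k|²)`. -/
theorem stmt_2 (γ Λ Λ₁ : ℝ) (hγ : 0 < γ) (hΛ : 1 ≤ Λ) (hΛ₁ : 0 < Λ₁) :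
    ∃ C > 0, ∀ (ε μ εh μh : ℝ) (α k : ℂ),
      Λ⁻¹ ≤ ε → ε ≤ Λ → Λ⁻¹ ≤ μ → μ ≤ Λ →
      Λ⁻¹ ≤ εh → εh ≤ Λ → Λ⁻¹ ≤ μh → μh ≤ Λ →
      Λ₁ ≤ |μ - μh| → Λ₁ ≤ |ε / μ - εh / μh| →
      (α ^ 2).im = 0 → ‖α‖ = 1 →
      γ * ‖k‖ ^ 2 ≤ |(k ^ 2).im| →
      γ * ‖k‖ ^ 2 ≤ |(α ^ 2 * k ^ 2).im| →
      1 ≤ ‖k‖ →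
      ∀ ξ : EuclideanSpace ℝ (Fin 2),
        C * (‖ξ‖ ^ 2 + ‖k‖ ^ 2) ≤
          ‖(((μ : ℂ) ^ 2 - α ^ 2 * (μh : ℂ) ^ 2) * ((‖ξ‖ ^ 2 : ℝ) : ℂ) +
            α ^ 2 * k ^ 2 * (ε : ℂ) * (εh : ℂ) * (μ : ℂ) * (μh : ℂ) *
              ((μ / ε - μh / εh : ℝ) : ℂ))‖ := by
  have hm : 0 < Λ⁻¹ := inv_pos.mpr (zero_lt_one.trans_le hΛ)
  set p := γ * (Λ⁻¹ ^ 4 * Λ₁)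
  set q := min (2 * Λ⁻¹ ^ 2) (2 * Λ⁻¹ * Λ₁)
  refine ⟨min (p * q / (p + Λ ^ 4)) p / 2, by positivity, ?_⟩
  intro ε μ εh μh α k hε₁ hε₂ hμ₁ hμ₂ hεh₁ hεh₂ hμh₁ hμh₂ hμμh hratio hα₂ hα hk _ _ ξ
  obtain ⟨s, hs, hαs⟩ : ∃ s : ℝ, |s| = 1 ∧ α ^ 2 = s := by
    refine ⟨(α ^ 2).re, ?_, Complex.ext rfl (by simpa using hα₂)⟩
    rw [Complex.abs_re_eq_norm.mpr hα₂, norm_pow, hα, one_pow]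
  have hε : 0 < ε := hm.trans_le hε₁
  have hεh : 0 < εh := hm.trans_le hεh₁
  set B := ε * εh * μ * μh * (μ / ε - μh / εh)
  have hB₁ : Λ⁻¹ ^ 4 * Λ₁ ≤ |s * B| := by
    rw [abs_mul, hs, one_mul]
    exact pow_four_mul_le_abs_mul_div_sub_div hε hεh hm hμ₁ hμh₁ hΛ₁.le hratio
  have hB₂ : |s * B| ≤ Λ ^ 4 := by
    rw [abs_mul, hs, one_mul]
    exact abs_mul_div_sub_div_le_pow_four hε hεh (hm.le.trans hμ₁) (hm.le.trans hμh₁)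
      hε₂ hεh₂ hμ₂ hμh₂
  have hA : q ≤ |μ ^ 2 - s * μh ^ 2| := min_le_abs_sq_sub_mul_sq hm.le hμ₁ hμh₁ hμμh hs
  have hbound := min_mul_add_norm_le_norm_ofReal_mul_add (sq_nonneg ‖ξ‖) hγ (by positivity) hA hB₁
    hB₂ (w := k ^ 2) (by rwa [norm_pow])
  rw [norm_pow] at hbound
  convert hbound using 2
  rw [hαs]
  push_cast [B]
  ring
end
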